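/- The 4-dimensional Lie algebra L_{J⊥} with brackets [H,E]=E, [H,A]=A, [H,B]=0, [A,B]=E, [E,A]=0, [E,B]=ξE (for a fixed nonzero scalar ξ) is a Frobenius Lie algebra. -/

import Mathlib

/-!
Take `f = E*`, the coordinate functional of `E`. In the basis `H, A, B, E` the Gram matrix of
`(x, y) ↦ f ⁅x, y⁆` is antisymmetric with Pfaffian `f ⁅H, E⁆ * f ⁅A, B⁆ = 1`, so its determinant
is `1` and the form is nondegenerate.
-/

open LinearMap (BilinForm)

namespace LieAlgebra

variable {K L : Type*} [CommRing K] [LieRing L] [LieAlgebra K L]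

/-- The form `(x, y) ↦ f ⁅x, y⁆`; `L` is Frobenius when it is nondegenerate for some `f`. -/
def kirillovForm (f : Module.Dual K L) : BilinForm K L :=
  (LieModule.toEnd K L L : L →ₗ[K] Module.End K L).compr₂ f

@[simp]
lemma kirillovForm_apply (f : Module.Dual K L) (x y : L) : kirillovForm f x y = f ⁅x, y⁆ :=
  rfl

lemma kirillovForm_separatingLeft_of_det_ne_zero [IsDomain K] {ι : Type*} [Fintype ι]
    [DecidableEq ι] (b : Module.Basis ι K L) (f : Module.Dual K L)
    (h : (Matrix.of fun i j ↦ f ⁅b i, b j⁆).det ≠ 0) : (kirillovForm f).SeparatingLeft := by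
  rw [← LinearMap.BilinForm.separatingLeft_toMatrix_iff b, Matrix.separatingLeft_iff_det_ne_zero]
  convert h using 2
  ext i j
  simp [LinearMap.BilinForm.toMatrix_apply]

end LieAlgebra

lemma det_coord_three_lie_eq_one {K L : Type*} [CommRing K] [LieRing L] [LieAlgebra K L]
    (ξ : K) (b : Module.Basis (Fin 4) K L)
    (hHA : ⁅b 0, b 1⁆ = b 1) (hHB : ⁅b 0, b 2⁆ = 0) (hHE : ⁅b 0, b 3⁆ = b 3)
    (hAB : ⁅b 1, b 2⁆ = b 3) (hEA : ⁅b 3, b 1⁆ = 0) (hEB : ⁅b 3, b 2⁆ = ξ • b 3) :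
    (Matrix.of fun i j ↦ b.coord 3 ⁅b i, b j⁆).det = 1 := by
  have hAH : ⁅b 1, b 0⁆ = -b 1 := by rw [← lie_skew, hHA]
  have hBH : ⁅b 2, b 0⁆ = 0 := by rw [← lie_skew, hHB, neg_zero]
  have hEH : ⁅b 3, b 0⁆ = -b 3 := by rw [← lie_skew, hHE]
  have hBA : ⁅b 2, b 1⁆ = -b 3 := by rw [← lie_skew, hAB]
  have hAE : ⁅b 1, b 3⁆ = 0 := by rw [← lie_skew, hEA, neg_zero]
  have hBE : ⁅b 2, b 3⁆ = -(ξ • b 3) := by rw [← lie_skew, hEB]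
  have hgram : (Matrix.of fun i j ↦ b.coord 3 ⁅b i, b j⁆) =
      !![0, 0, 0, 1; 0, 0, 1, 0; 0, -1, 0, -ξ; -1, 0, ξ, 0] := by
    ext i j
    fin_cases i <;> fin_cases j <;>
      simp [hHA, hHB, hHE, hAB, hEA, hEB, hAH, hBH, hEH, hBA, hAE, hBE]
  rw [hgram]
  simp [Matrix.det_succ_row_zero, Fin.sum_univ_succ, Fin.succAbove]
  norm_num

theorem stmt4 {K : Type} [Field K] {L : Type} [LieRing L] [LieAlgebra K L]
    (ξ : K) (b : Module.Basis (Fin 4) K L)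
    (hHA : ⁅b 0, b 1⁆ = b 1) (hHB : ⁅b 0, b 2⁆ = 0) (hHE : ⁅b 0, b 3⁆ = b 3)
    (hAB : ⁅b 1, b 2⁆ = b 3) (hEA : ⁅b 3, b 1⁆ = 0) (hEB : ⁅b 3, b 2⁆ = ξ • b 3) :
    ∃ f : L →ₗ[K] K, ∀ x : L, (∀ y : L, f ⁅x, y⁆ = 0) → x = 0 := by
  have hdet : (Matrix.of fun i j ↦ b.coord 3 ⁅b i, b j⁆).det ≠ 0 := by
    rw [det_coord_three_lie_eq_one ξ b hHA hHB hHE hAB hEA hEB]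
    exact one_ne_zero
  exact ⟨b.coord 3, LieAlgebra.kirillovForm_separatingLeft_of_det_ne_zero b (b.coord 3) hdet⟩
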